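/- arXiv:2304.05317 — 8 statements merged into one kernel-verified Lean document; each statement's English description precedes it below -/
import Mathlib

section
/- Let R be a commutative ring and t ∈ R. If (A_i, φ_{ji}) is a Mittag-Leffler directed inverse system of R-modules, then the localized system (A_i ⊗_R R[1/t]) with the induced transition maps is again Mittag-Leffler. Moreover, if (B_i, φ_{ji}) is a directed inverse system of R-modules with A_i ⊆ B_i compatibly with the transition maps and (A_i) ⊨ (B_i), then (A_i ⊗_R R[1/t]) ⊨ (B_i ⊗_R R[1/t]). -/
/-!
The image of `g ⊗ R[1/t]` is the image of `(im g) ⊗ R[1/t] → N ⊗ R[1/t]`, since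
`M ⊗ R[1/t] → (im g) ⊗ R[1/t]` is still surjective. So it depends only on `im g`, and every
equality of images in the Mittag-Leffler and `⊨` conditions survives base change; no flatness
of `R[1/t]` is needed.
-/

namespace LinearMap

variable {R A M M' N : Type*} [CommSemiring R] [Semiring A] [Algebra R A]
  [AddCommMonoid M] [Module R M] [AddCommMonoid M'] [Module R M']
  [AddCommMonoid N] [Module R N]

theorem range_baseChange (g : M →ₗ[R] N) :
    range (g.baseChange A) = (range g).baseChange A := by
  have hg : g = (range g).subtype ∘ₗ g.rangeRestrict := rfl
  conv_lhs => rw [hg, baseChange_comp]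
  exact range_comp_of_range_eq_top _
    (range_eq_top.2 (baseChange_surjective A g.surjective_rangeRestrict))

theorem range_baseChange_eq_of_range_eq {g : M →ₗ[R] N} {g' : M' →ₗ[R] N}
    (h : range g = range g') : range (g.baseChange A) = range (g'.baseChange A) := by
  rw [range_baseChange, range_baseChange, h]

end LinearMap

theorem mittagLeffler_and_models_localization_general
    {R : Type*} [CommRing R] (t : R)
    {ι : Type*} [Preorder ι]
    (A : ι → Type*) [∀ i, AddCommGroup (A i)] [∀ i, Module R (A i)]
    (B : ι → Type*) [∀ i, AddCommGroup (B i)] [∀ i, Module R (B i)]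
    -- the transition maps of the two inverse systems
    (φA : ∀ {i j : ι}, i ≤ j → (A j →ₗ[R] A i))
    (φB : ∀ {i j : ι}, i ≤ j → (B j →ₗ[R] B i))
    -- the compatible inclusions `A_i ⊆ B_i`
    (f : ∀ i : ι, A i →ₗ[R] B i)
    -- `(A_i)` is Mittag-Leffler
    (hML : ∀ i : ι, ∃ j : ι, ∃ hij : i ≤ j, ∀ k : ι, ∀ hjk : j ≤ k,
      LinearMap.range (φA (hij.trans hjk)) = LinearMap.range (φA hij))
    -- `(A_i) ⊨ (B_i)`
    (hmodels : ∀ i : ι, ∃ j : ι, ∃ hij : i ≤ j, ∀ k : ι, ∀ hjk : j ≤ k,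
      LinearMap.range ((φB (hij.trans hjk)).comp (f k)) =
        LinearMap.range (φB (hij.trans hjk))) :
    -- the localized system `(A_i ⊗_R R[1/t])` is Mittag-Leffler
    (∀ i : ι, ∃ j : ι, ∃ hij : i ≤ j, ∀ k : ι, ∀ hjk : j ≤ k,
      LinearMap.range ((φA (hij.trans hjk)).baseChange (Localization.Away t)) =
        LinearMap.range ((φA hij).baseChange (Localization.Away t))) ∧
    -- and `(A_i ⊗_R R[1/t]) ⊨ (B_i ⊗_R R[1/t])`
    (∀ i : ι, ∃ j : ι, ∃ hij : i ≤ j, ∀ k : ι, ∀ hjk : j ≤ k,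
      LinearMap.range (((φB (hij.trans hjk)).baseChange (Localization.Away t)).comp
          ((f k).baseChange (Localization.Away t))) =
        LinearMap.range ((φB (hij.trans hjk)).baseChange (Localization.Away t))) := by
  refine ⟨fun i => ?_, fun i => ?_⟩
  · obtain ⟨j, hij, hstable⟩ := hML i
    exact ⟨j, hij, fun k hjk => LinearMap.range_baseChange_eq_of_range_eq (hstable k hjk)⟩
  · obtain ⟨j, hij, hsurj⟩ := hmodels i
    refine ⟨j, hij, fun k hjk => ?_⟩
    rw [← LinearMap.baseChange_comp]
    exact LinearMap.range_baseChange_eq_of_range_eq (hsurj k hjk)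

/-- Lemma 2.2.3 of the paper.
Let `R` be a commutative ring and `t ∈ R`.  If `(A_i, φ_{ji})` is a Mittag-Leffler directed
inverse system of `R`-modules, then the localized system `(A_i ⊗_R R[1/t])` is again
Mittag-Leffler; and if moreover `(A_i) ⊆ (B_i)` compatibly with the transition maps and
`(A_i) ⊨ (B_i)`, then `(A_i ⊗_R R[1/t]) ⊨ (B_i ⊗_R R[1/t])`. -/
theorem mittagLeffler_and_models_localization
    {R : Type*} [CommRing R] (t : R)
    {ι : Type*} [Preorder ι] [IsDirected ι (· ≤ ·)]
    (A : ι → Type*) [∀ i, AddCommGroup (A i)] [∀ i, Module R (A i)]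
    (B : ι → Type*) [∀ i, AddCommGroup (B i)] [∀ i, Module R (B i)]
    -- the transition maps of the two inverse systems
    (φA : ∀ {i j : ι}, i ≤ j → (A j →ₗ[R] A i))
    (φB : ∀ {i j : ι}, i ≤ j → (B j →ₗ[R] B i))
    (hφA_id : ∀ i : ι, φA (le_refl i) = LinearMap.id)
    (hφA_comp : ∀ {i j k : ι} (hij : i ≤ j) (hjk : j ≤ k),
      (φA hij).comp (φA hjk) = φA (hij.trans hjk))
    (hφB_id : ∀ i : ι, φB (le_refl i) = LinearMap.id)
    (hφB_comp : ∀ {i j k : ι} (hij : i ≤ j) (hjk : j ≤ k),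
      (φB hij).comp (φB hjk) = φB (hij.trans hjk))
    -- the compatible inclusions `A_i ⊆ B_i`
    (f : ∀ i : ι, A i →ₗ[R] B i)
    (hf_inj : ∀ i : ι, Function.Injective (f i))
    (hf_compat : ∀ {i j : ι} (h : i ≤ j), (f i).comp (φA h) = (φB h).comp (f j))
    -- `(A_i)` is Mittag-Leffler
    (hML : ∀ i : ι, ∃ j : ι, ∃ hij : i ≤ j, ∀ k : ι, ∀ hjk : j ≤ k,
      LinearMap.range (φA (hij.trans hjk)) = LinearMap.range (φA hij))
    -- `(A_i) ⊨ (B_i)`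
    (hmodels : ∀ i : ι, ∃ j : ι, ∃ hij : i ≤ j, ∀ k : ι, ∀ hjk : j ≤ k,
      LinearMap.range ((φB (hij.trans hjk)).comp (f k)) =
        LinearMap.range (φB (hij.trans hjk))) :
    -- the localized system `(A_i ⊗_R R[1/t])` is Mittag-Leffler
    (∀ i : ι, ∃ j : ι, ∃ hij : i ≤ j, ∀ k : ι, ∀ hjk : j ≤ k,
      LinearMap.range ((φA (hij.trans hjk)).baseChange (Localization.Away t)) =
        LinearMap.range ((φA hij).baseChange (Localization.Away t))) ∧
    -- and `(A_i ⊗_R R[1/t]) ⊨ (B_i ⊗_R R[1/t])`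
    (∀ i : ι, ∃ j : ι, ∃ hij : i ≤ j, ∀ k : ι, ∀ hjk : j ≤ k,
      LinearMap.range (((φB (hij.trans hjk)).baseChange (Localization.Away t)).comp
          ((f k).baseChange (Localization.Away t))) =
        LinearMap.range ((φB (hij.trans hjk)).baseChange (Localization.Away t))) :=
  mittagLeffler_and_models_localization_general t A B φA φB f hML hmodels
end

section
/- Let p be a prime, a ≥ 1 an integer, and A a commutative ring with p^a·A = 0. Let q ≥ 2 be an integer and let φ : A((u)) → A((u)) be a ring endomorphism such that φ(u) ∈ u^q + p·A((u)). Then for every real number λ with 1 < λ < q, φ is locally contracting with contracting factor λ: there exists an integer N such that φ(u^n) ∈ u^{⌊λn⌋}·A[[u]] for all integers n > N. -/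
/-!
Write `φ(u) = u^q + ε` with `ε = p·y`. Since `p^a = 0`, `ε` is nilpotent, and clearing the pole
of `ε` by `u^m` puts `u^m φ(u) = u^(q+m) + u^m ε` in `A[[u]]`. In a commutative ring a power
`(x + ε')^n` with `ε'^a = 0` is divisible by `x^(n+1-a)`, so `φ(u)^n` lies in
`u^(q n - (q+m)(a-1)) A[[u]]`; for `λ < q` this exponent exceeds `⌊λ n⌋` once `n` is large.
-/

noncomputable def uvar (A : Type*) [CommRing A] : LaurentSeries A :=
  HahnSeries.single (1 : ℤ) (1 : A)

open HahnSeries PowerSeries Filter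

section uvar

variable {A : Type*} [CommRing A]

theorem ofPowerSeries_X_pow_eq_uvar_pow (n : ℕ) :
    ofPowerSeries ℤ A (X ^ n) = uvar A ^ n := by
  rw [map_pow, ofPowerSeries_X]; rfl

theorem isUnit_uvar : IsUnit (uvar A) :=
  IsUnit.of_mul_eq_one (single (-1 : ℤ) 1) (by rw [uvar, single_mul_single]; simp)

theorem exists_uvar_pow_mul_eq_ofPowerSeries (y : LaurentSeries A) :
    ∃ (m : ℕ) (g : PowerSeries A), uvar A ^ m * y = ofPowerSeries ℤ A g := by
  obtain ⟨⟨g, ⟨_, m, rfl⟩⟩, h⟩ := IsLocalization.surj (Submonoid.powers (X : PowerSeries A)) y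
  refine ⟨m, g, ?_⟩
  simpa [mul_comm, ofPowerSeries_X_pow_eq_uvar_pow] using h

theorem exists_uvar_pow_add_pow_eq_uvar_pow_mul {q m a n D : ℕ} {ε : LaurentSeries A}
    {g : PowerSeries A} (hεg : uvar A ^ m * ε = ofPowerSeries ℤ A g) (hε : ε ^ a = 0)
    (han : a ≤ n + 1) (hD : D + (q + m) * (a - 1) ≤ q * n) :
    ∃ h : PowerSeries A, (uvar A ^ q + ε) ^ n = uvar A ^ D * ofPowerSeries ℤ A h := by
  have hg : g ^ a = 0 := ofPowerSeries_injective (Γ := ℤ) <| by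
    rw [map_pow, ← hεg, mul_pow, hε, mul_zero, map_zero]
  obtain ⟨h, hh⟩ : (X ^ (q + m)) ^ (n + 1 - a) ∣ (X ^ (q + m) + g) ^ n :=
    (Commute.all _ _).pow_dvd_add_pow_of_pow_eq_zero_right (by omega) hg
  obtain ⟨e, he⟩ : ∃ e, (q + m) * (n + 1 - a) = m * n + D + e := by
    refine Nat.exists_eq_add_of_le ?_
    obtain ⟨r, rfl⟩ := Nat.exists_eq_add_of_le (show a - 1 ≤ n by omega)
    have hr : (q + m) * r ≤ (q + m) * (a - 1 + r + 1 - a) := Nat.mul_le_mul_left _ (by omega)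
    linarith
  refine ⟨X ^ e * h, (isUnit_uvar.pow (m * n)).mul_left_cancel ?_⟩
  calc uvar A ^ (m * n) * (uvar A ^ q + ε) ^ n
      = ofPowerSeries ℤ A ((X ^ (q + m) + g) ^ n) := by
        rw [pow_mul, ← mul_pow, map_pow, map_add, ← hεg, ofPowerSeries_X_pow_eq_uvar_pow]
        ring
    _ = uvar A ^ (m * n) * (uvar A ^ D * ofPowerSeries ℤ A (X ^ e * h)) := by
        rw [hh, ← pow_mul, he, map_mul, map_mul, ofPowerSeries_X_pow_eq_uvar_pow,
          ofPowerSeries_X_pow_eq_uvar_pow]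
        ring

end uvar

theorem eventually_floor_mul_add_le {lam : ℝ} {q : ℕ} (hlam : 0 ≤ lam) (hlq : lam < q)
    (c : ℕ) : ∀ᶠ n : ℕ in atTop, ⌊lam * n⌋₊ + c ≤ q * n := by
  have hgrow : Tendsto (fun n : ℕ ↦ ((q : ℝ) - lam) * n) atTop atTop :=
    tendsto_natCast_atTop_atTop.const_mul_atTop (sub_pos.2 hlq)
  filter_upwards [hgrow.eventually_gt_atTop (c : ℝ)] with n hn
  have hfloor := Nat.floor_le (mul_nonneg hlam n.cast_nonneg)
  exact_mod_cast (by push_cast; linarith : ((⌊lam * n⌋₊ + c : ℕ) : ℝ) ≤ q * n)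

theorem locally_contracting_of_deformed_frobenius_general
    {p a : ℕ}
    {A : Type*} [CommRing A] (hpa : (p : A) ^ a = 0)
    {q : ℕ}
    (φ : LaurentSeries A →+* LaurentSeries A)
    (hφu : ∃ y : LaurentSeries A, φ (uvar A) = uvar A ^ q + (p : LaurentSeries A) * y) :
    ∀ lam : ℝ, 1 < lam → lam < q →
      ∃ N : ℕ, ∀ n : ℕ, N < n →
        ∃ g : PowerSeries A,
          φ (uvar A ^ n) = uvar A ^ ⌊lam * (n : ℝ)⌋₊ * HahnSeries.ofPowerSeries ℤ A g := by
  intro lam hlam hlq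
  obtain ⟨y, hy⟩ := hφu
  have hε : ((p : LaurentSeries A) * y) ^ a = 0 := by
    rw [mul_pow, ← map_natCast (C : A →+* LaurentSeries A), ← map_pow, hpa, map_zero, zero_mul]
  obtain ⟨m, g, hg⟩ := exists_uvar_pow_mul_eq_ofPowerSeries ((p : LaurentSeries A) * y)
  obtain ⟨N, hN⟩ := eventually_atTop.1 <| (eventually_ge_atTop a).and <|
    eventually_floor_mul_add_le (by linarith) hlq ((q + m) * (a - 1))
  refine ⟨N, fun n hn ↦ ?_⟩
  obtain ⟨han, hD⟩ := hN n hn.le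
  rw [map_pow, hy]
  exact exists_uvar_pow_add_pow_eq_uvar_pow_mul hg hε (by omega) hD

/-- Lemma 2.5.1 of the paper.
Let `p` be a prime, `a ≥ 1`, and `A` a commutative ring with `p^a·A = 0`.  Let `q ≥ 2` and
let `φ : A((u)) → A((u))` be a ring endomorphism with `φ(u) ∈ u^q + p·A((u))`.  Then for every
real `λ` with `1 < λ < q`, `φ` is locally contracting with contracting factor `λ`: there is
an integer `N` such that `φ(u^n) ∈ u^{⌊λn⌋}·A[[u]]` for all `n > N`. -/
theorem locally_contracting_of_deformed_frobenius
    {p a : ℕ} (hp : p.Prime) (ha : 1 ≤ a)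
    {A : Type*} [CommRing A] (hpa : (p : A) ^ a = 0)
    {q : ℕ} (hq : 2 ≤ q)
    (φ : LaurentSeries A →+* LaurentSeries A)
    (hφu : ∃ y : LaurentSeries A, φ (uvar A) = uvar A ^ q + (p : LaurentSeries A) * y) :
    ∀ lam : ℝ, 1 < lam → lam < q →
      ∃ N : ℕ, ∀ n : ℕ, N < n →
        ∃ g : PowerSeries A,
          φ (uvar A ^ n) = uvar A ^ ⌊lam * (n : ℝ)⌋₊ * HahnSeries.ofPowerSeries ℤ A g :=
  locally_contracting_of_deformed_frobenius_general hpa φ hφu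
end

section
/- Let A be a commutative ring and let B be an A-algebra such that every maximal ideal of A is the preimage of some prime ideal of B (equivalently, all closed points of Spec A are contained in the image of Spec B → Spec A). Let M₁ → M₂ → M₃ be homomorphisms of finite projective A-modules whose composite M₁ → M₃ is zero, and suppose that the base-changed sequence 0 → M₁ ⊗_A B → M₂ ⊗_A B → M₃ ⊗_A B → 0 is a short exact sequence. Then 0 → M₁ → M₂ → M₃ → 0 is also a short exact sequence. -/
/-!
If a finite module `M` is nonzero, its support contains a maximal ideal `m`; the fibre of
`Spec B → Spec A` over `m` is nonempty, so `κ(m) ⊗[A] B ≠ 0` and `κ(m) ⊗[A] M ≠ 0`, and their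
tensor product over the field `κ(m)`, which is a base change of `B ⊗[A] M`, is nonzero. Hence
`B ⊗[A] -` detects vanishing of finite modules, and so detects surjectivity of maps onto finite
modules (look at the cokernel) and injectivity of surjections onto projective modules (the kernel is
then a finite direct summand). Apply this to `g`, then to the corestriction `M₁ → ker g`, whose
target is projective as a direct summand of `M₂`.
-/

open TensorProduct Function

namespace Module

variable {A B M : Type*} [CommRing A] [CommRing B] [Algebra A B]
  [AddCommGroup M] [Module A M] [Module.Finite A M]

theorem nontrivial_baseChange_of_mem_support {p : PrimeSpectrum A}
    (hM : p ∈ support A M) (hB : p ∈ Set.range (PrimeSpectrum.comap (algebraMap A B))) :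
    Nontrivial (B ⊗[A] M) := by
  let K := p.asIdeal.ResidueField
  have : Nontrivial (K ⊗[A] B) := (PrimeSpectrum.nontrivial_iff_mem_rangeComap p).2 hB
  have : Nontrivial (K ⊗[A] M) := (mem_support_iff_nontrivial_residueField_tensorProduct p).1 hM
  have : Nontrivial ((K ⊗[A] B) ⊗[K] (K ⊗[A] M)) :=
    (FaithfullyFlat.nontrivial_tensorProduct_iff_left K _).2 ‹_›
  let e : (K ⊗[A] B) ⊗[K] (K ⊗[A] M) ≃ₗ[A] K ⊗[A] (B ⊗[A] M) :=
    (AlgebraTensorModule.cancelBaseChange A K K (K ⊗[A] B) M).restrictScalars A ≪≫ₗ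
      TensorProduct.assoc A K B M
  have : Nontrivial (K ⊗[A] (B ⊗[A] M)) := e.symm.nontrivial
  by_contra h
  rw [not_nontrivial_iff_subsingleton] at h
  exact not_subsingleton (K ⊗[A] (B ⊗[A] M)) inferInstance

theorem subsingleton_of_subsingleton_baseChange
    (hmax : ∀ I : Ideal A, I.IsMaximal →
      ∃ Q : Ideal B, Q.IsPrime ∧ Q.comap (algebraMap A B) = I)
    [Subsingleton (B ⊗[A] M)] : Subsingleton M := by
  by_contra hM
  rw [not_subsingleton_iff_nontrivial] at hM
  obtain ⟨p, hp⟩ := nonempty_support_of_nontrivial (R := A) (M := M)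
  obtain ⟨m, hm, hpm⟩ := p.asIdeal.exists_le_maximal p.isPrime.ne_top
  obtain ⟨Q, hQ, hQm⟩ := hmax m hm
  have hmM : ⟨m, hm.isPrime⟩ ∈ support A M := mem_support_mono hpm hp
  have := nontrivial_baseChange_of_mem_support hmM ⟨⟨Q, hQ⟩, PrimeSpectrum.ext hQm⟩
  exact not_subsingleton (B ⊗[A] M) inferInstance

end Module

namespace LinearMap

section Retraction

variable {R M N : Type*} [CommRing R] [AddCommGroup M] [AddCommGroup N] [Module R M] [Module R N]

theorem baseChange_injective_of_comp_eq_id (B : Type*) [CommRing B] [Algebra R B]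
    {i : M →ₗ[R] N} {r : N →ₗ[R] M} (h : r ∘ₗ i = id) :
    Injective (i.baseChange B) :=
  LeftInverse.injective (g := r.baseChange B) fun x ↦ by
    rw [← comp_apply, ← baseChange_comp, h, baseChange_id, id_apply]

theorem exists_retraction_ker_subtype [Module.Projective R N] {φ : M →ₗ[R] N}
    (hφ : Surjective φ) : ∃ r : M →ₗ[R] ker φ, r ∘ₗ (ker φ).subtype = id := by
  obtain ⟨s, hs⟩ := φ.exists_rightInverse_of_surjective (range_eq_top.2 hφ)
  have hmem (x : M) : (LinearMap.id - s ∘ₗ φ : M →ₗ[R] M) x ∈ ker φ := by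
    simp [← comp_apply φ s, hs]
  exact ⟨(LinearMap.id - s ∘ₗ φ).codRestrict _ hmem, by ext x; simp [mem_ker.1 x.2]⟩

end Retraction

variable {A B : Type*} [CommRing A] [CommRing B] [Algebra A B]
  {M N : Type*} [AddCommGroup M] [AddCommGroup N] [Module A M] [Module A N]

theorem surjective_of_surjective_baseChange
    (hmax : ∀ I : Ideal A, I.IsMaximal →
      ∃ Q : Ideal B, Q.IsPrime ∧ Q.comap (algebraMap A B) = I)
    [Module.Finite A N] {φ : M →ₗ[A] N} (hφ : Surjective (φ.baseChange B)) :
    Surjective φ := by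
  have : Subsingleton (B ⊗[A] (N ⧸ range φ)) := by
    refine subsingleton_of_forall_eq 0 fun w ↦ ?_
    obtain ⟨z, rfl⟩ := (range φ).mkQ.baseChange_surjective B (range φ).mkQ_surjective w
    obtain ⟨y, rfl⟩ := hφ z
    rw [← comp_apply, ← baseChange_comp, range_mkQ_comp, baseChange_zero, zero_apply]
  have := Module.subsingleton_of_subsingleton_baseChange hmax (M := N ⧸ range φ)
  exact range_eq_top.1 (Submodule.Quotient.subsingleton_iff.1 this)

theorem injective_of_injective_baseChange
    (hmax : ∀ I : Ideal A, I.IsMaximal →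
      ∃ Q : Ideal B, Q.IsPrime ∧ Q.comap (algebraMap A B) = I)
    [Module.Finite A M] [Module.Projective A N] {φ : M →ₗ[A] N} (hφ : Surjective φ)
    (hφB : Injective (φ.baseChange B)) : Injective φ := by
  obtain ⟨r, hr⟩ := exists_retraction_ker_subtype hφ
  have : Module.Finite A (ker φ) := .of_surjective r (RightInverse.surjective (congr($hr ·)))
  have : Subsingleton (B ⊗[A] ker φ) := by
    refine subsingleton_of_forall_eq 0 fun w ↦ baseChange_injective_of_comp_eq_id B hr <| hφB ?_
    rw [← comp_apply, ← baseChange_comp, comp_ker_subtype, baseChange_zero, zero_apply, map_zero,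
      map_zero]
  have := Module.subsingleton_of_subsingleton_baseChange hmax (M := ker φ)
  exact ker_eq_bot.1 Submodule.eq_bot_of_subsingleton

end LinearMap

open LinearMap in
theorem shortExact_of_shortExact_baseChange_general
    {A B : Type*} [CommRing A] [CommRing B] [Algebra A B]
    (hmax : ∀ I : Ideal A, I.IsMaximal →
      ∃ Q : Ideal B, Q.IsPrime ∧ Q.comap (algebraMap A B) = I)
    {M₁ M₂ M₃ : Type*}
    [AddCommGroup M₁] [AddCommGroup M₂] [AddCommGroup M₃]
    [Module A M₁] [Module A M₂] [Module A M₃]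
    [Module.Finite A M₁] [Module.Finite A M₂] [Module.Finite A M₃]
    [Module.Projective A M₂] [Module.Projective A M₃]
    (f : M₁ →ₗ[A] M₂) (g : M₂ →ₗ[A] M₃)
    (hfg : g.comp f = 0)
    (hinj : Function.Injective (f.baseChange B))
    (hexact : Function.Exact (f.baseChange B) (g.baseChange B))
    (hsurj : Function.Surjective (g.baseChange B)) :
    Function.Injective f ∧ Function.Exact f g ∧ Function.Surjective g := by
  have hg : Surjective g := surjective_of_surjective_baseChange hmax hsurj
  obtain ⟨r, hr⟩ := exists_retraction_ker_subtype hg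
  have : Module.Finite A (ker g) := .of_surjective r (RightInverse.surjective (congr($hr ·)))
  have : Module.Projective A (ker g) := .of_split _ r hr
  let f' : M₁ →ₗ[A] ker g := f.codRestrict _ fun x ↦ congr($hfg x)
  have hf : (ker g).subtype ∘ₗ f' = f := rfl
  have hf'B_inj : Injective (f'.baseChange B) := by
    rw [← hf, baseChange_comp, coe_comp] at hinj
    exact hinj.of_comp
  have hf'B_surj : Surjective (f'.baseChange B) := fun y ↦ by
    have hy : g.baseChange B ((ker g).subtype.baseChange B y) = 0 := by
      rw [← LinearMap.comp_apply, ← baseChange_comp, comp_ker_subtype, baseChange_zero,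
        LinearMap.zero_apply]
    obtain ⟨x, hx⟩ := (hexact _).1 hy
    refine ⟨x, baseChange_injective_of_comp_eq_id B hr ?_⟩
    rw [← LinearMap.comp_apply, ← baseChange_comp, hf, hx]
  have hf'_surj : Surjective f' := surjective_of_surjective_baseChange hmax hf'B_surj
  have hf'_inj : Injective f' := injective_of_injective_baseChange hmax hf'_surj hf'B_inj
  refine ⟨(ker g).injective_subtype.comp hf'_inj, ?_, hg⟩
  rw [exact_iff, ← hf, range_comp, range_eq_top.2 hf'_surj, Submodule.map_top,
    Submodule.range_subtype]

/-- Lemma 2.5.4 of the paper.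
Let `B` be an `A`-algebra such that every maximal ideal of `A` is the preimage of a prime of
`B`.  If a sequence `M₁ → M₂ → M₃` of finite projective `A`-modules with zero composite becomes
a short exact sequence after base change to `B`, then it is itself a short exact sequence. -/
theorem shortExact_of_shortExact_baseChange
    {A B : Type*} [CommRing A] [CommRing B] [Algebra A B]
    (hmax : ∀ I : Ideal A, I.IsMaximal →
      ∃ Q : Ideal B, Q.IsPrime ∧ Q.comap (algebraMap A B) = I)
    {M₁ M₂ M₃ : Type*}
    [AddCommGroup M₁] [AddCommGroup M₂] [AddCommGroup M₃]
    [Module A M₁] [Module A M₂] [Module A M₃]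
    [Module.Finite A M₁] [Module.Finite A M₂] [Module.Finite A M₃]
    [Module.Projective A M₁] [Module.Projective A M₂] [Module.Projective A M₃]
    (f : M₁ →ₗ[A] M₂) (g : M₂ →ₗ[A] M₃)
    (hfg : g.comp f = 0)
    (hinj : Function.Injective (f.baseChange B))
    (hexact : Function.Exact (f.baseChange B) (g.baseChange B))
    (hsurj : Function.Surjective (g.baseChange B)) :
    Function.Injective f ∧ Function.Exact f g ∧ Function.Surjective g :=
  shortExact_of_shortExact_baseChange_general hmax f g hfg hinj hexact hsurj
end

section
/- Let A → B be a homomorphism of commutative rings with B Noetherian. If the composite map A → B → B/nil(B), where nil(B) is the nilradical of B, is surjective, then B is finitely generated as an A-module. -/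
/-- Let `A → B` be a homomorphism of commutative rings with `B` Noetherian.
If the composite map `A → B → B/nil(B)` is surjective, then `B` is finitely generated as an
`A`-module. -/
theorem finite_of_surjective_onto_quotient_nilradical
    {A B : Type*} [CommRing A] [CommRing B] [IsNoetherianRing B] [Algebra A B]
    (h : Function.Surjective
      ((Ideal.Quotient.mk (nilradical B)).comp (algebraMap A B))) :
    Module.Finite A B := by
  set N : Ideal B := nilradical B with hN
  obtain ⟨n, hn⟩ := IsNoetherianRing.isNilpotent_nilradical B
  -- key step: if (N^(k+1)).restrictScalars A is fg, so is (N^k).restrictScalars A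
  have key : ∀ k : ℕ, ((N ^ (k + 1)).restrictScalars A).FG →
      ((N ^ k).restrictScalars A).FG := by
    intro k hk
    obtain ⟨s, hs⟩ := IsNoetherian.noetherian (N ^ k)
    -- N^k = span A s ⊔ N^(k+1) as A-submodules
    have hle : (N ^ k).restrictScalars A ≤
        Submodule.span A (s : Set B) ⊔ (N ^ (k + 1)).restrictScalars A := by
      intro x hx
      have hx' : x ∈ Submodule.span B (s : Set B) := by
        have hx2 : x ∈ N ^ k := hx
        rw [← hs] at hx2; exact hx2
      obtain ⟨m, f, g, rfl⟩ := Submodule.mem_span_set'.mp hx'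
      refine Submodule.sum_mem _ fun i _ => ?_
      -- write f i = algebraMap A B a + ν with ν ∈ N
      obtain ⟨a, ha⟩ := h (Ideal.Quotient.mk N (f i))
      have hnu : f i - algebraMap A B a ∈ N := by
        rw [← Ideal.Quotient.eq_zero_iff_mem, map_sub]
        rw [RingHom.comp_apply] at ha
        rw [ha, sub_self]
      have hsg : (g i : B) ∈ N ^ k := by
        rw [← hs]; exact Submodule.subset_span (g i).2
      have : f i • (g i : B) = a • (g i : B) + (f i - algebraMap A B a) * (g i : B) := by
        simp [Algebra.smul_def]; ring
      rw [this]
      refine Submodule.add_mem _ ?_ ?_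
      · exact Submodule.mem_sup_left (Submodule.smul_mem _ _ (Submodule.subset_span (g i).2))
      · refine Submodule.mem_sup_right ?_
        show (f i - algebraMap A B a) * (g i : B) ∈ N ^ (k + 1)
        rw [pow_succ']
        exact Ideal.mul_mem_mul hnu hsg
    have heq : (N ^ k).restrictScalars A =
        Submodule.span A (s : Set B) ⊔ (N ^ (k + 1)).restrictScalars A := by
      refine le_antisymm hle (sup_le ?_ ?_)
      · rw [Submodule.span_le]
        intro x hx
        show x ∈ N ^ k
        rw [← hs]; exact Submodule.subset_span hx
      · intro x hx
        show x ∈ N ^ k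
        exact Ideal.pow_le_pow_right (Nat.le_succ k) hx
    rw [heq]
    exact Submodule.FG.sup ⟨s, rfl⟩ hk
  -- descending induction
  have main : ∀ j k : ℕ, j + k = n → ((N ^ k).restrictScalars A).FG := by
    intro j
    induction j with
    | zero => intro k hk; simp only [Nat.zero_add] at hk; subst hk
              rw [hn]
              exact ⟨∅, by simp [eq_comm, Submodule.restrictScalars_eq_bot_iff]⟩
    | succ m ih => intro k hk
                   exact key k (ih (k + 1) (by omega))
  have h0 : ((N ^ 0).restrictScalars A).FG := main n 0 (by omega)
  rw [Module.finite_def]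
  simpa using h0
end

section
/- Let p be a prime, a ≥ 1 an integer, and B a commutative ring with p^a·B = 0. Let B⁺ ⊆ B be a subring, let t ∈ B⁺ be an element which is invertible in B, let c ≥ 0 be an integer, and let φ : B → B be a ring endomorphism with φ(B⁺) ⊆ B⁺ + p·t^{-c}·B⁺. For an integer m ≥ 0, call an invertible N×N matrix X over B m-bounded if for every 0 ≤ i ≤ a all entries of p^{a−i}·X and of p^{a−i}·X^{-1} lie in t^{-m-ci}·B⁺. Then for every invertible matrix g over B all of whose entries, together with all entries of g^{-1}, lie in B⁺, and for every m-bounded X, the matrix g^{-1}·X·φ(g) is again m-bounded, where φ is applied to matrices entrywise. -/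
/-!
For `0 ≤ i ≤ a` let `L_i = t^{-m-ci}·B⁺`. The set of `z` with `p^{a-i}·z ∈ L_i` for all
`i ≤ a` is a `B⁺`-module, and it is stable under multiplication by `φ(x)` for `x ∈ B⁺`: writing
`φ(x) = y + p·t^{-c}·w`, the term `y·z` is harmless, and
`p^{a-i}·p·t^{-c}·w·z = t^{-c}·w·(p^{a-(i-1)}·z) ∈ t^{-c}·L_{i-1} = L_i` for `i ≥ 1`, while for
`i = 0` it is a multiple of `p^{a+1} = 0`. The entries of `g⁻¹·X·φ(g)` and of its inverse
`φ(g⁻¹)·X⁻¹·g` are sums of such products.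
-/

noncomputable section

/-- `X` is `m`-bounded: `X` is invertible and for every `0 ≤ i ≤ a` all entries of
`p^{a−i}·X` and of `p^{a−i}·X⁻¹` lie in `t^{-m-ci}·B⁺ = tinv^{m+ci}·B⁺`. -/
def MBounded {B : Type*} [CommRing B] (Bp : Subring B) (tinv : B) (p a c : ℕ)
    {NN : ℕ} (m : ℕ) (X : Matrix (Fin NN) (Fin NN) B) : Prop :=
  IsUnit X ∧ ∀ i : ℕ, i ≤ a → ∀ r s,
    (∃ v ∈ Bp, (p : B) ^ (a - i) * X r s = tinv ^ (m + c * i) * v) ∧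
    (∃ v ∈ Bp, (p : B) ^ (a - i) * X⁻¹ r s = tinv ^ (m + c * i) * v)

namespace Matrix

variable {n R : Type*} [Fintype n] [CommRing R]

theorem inv_mul_mul_map_isUnit [DecidableEq n] (φ : R →+* R) {g X : Matrix n n R}
    (hg : IsUnit g) (hX : IsUnit X) : IsUnit (g⁻¹ * X * g.map φ) :=
  ((isUnit_nonsing_inv_iff.mpr hg).mul hX).mul (hg.map φ.mapMatrix)

theorem inv_inv_mul_mul_map [DecidableEq n] (φ : R →+* R) {g : Matrix n n R} (hg : IsUnit g)
    (X : Matrix n n R) : (g⁻¹ * X * g.map φ)⁻¹ = g⁻¹.map φ * X⁻¹ * g := by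
  have hdet : IsUnit g.det := (isUnit_iff_isUnit_det g).mp hg
  have hmap : (g.map φ)⁻¹ = g⁻¹.map φ := by
    refine inv_eq_right_inv ?_
    rw [← RingHom.mapMatrix_apply, ← RingHom.mapMatrix_apply, ← map_mul,
      mul_nonsing_inv g hdet, map_one]
  rw [mul_inv_rev, mul_inv_rev, hmap, nonsing_inv_nonsing_inv g hdet, mul_assoc]

variable {φ : R →+* R} {Rp : Subring R} {S : Submodule Rp R}

theorem mul_mul_map_apply_mem (hS : ∀ z ∈ S, ∀ x ∈ Rp, z * φ x ∈ S)
    {A Y C : Matrix n n R} (hA : ∀ r s, A r s ∈ Rp) (hY : ∀ r s, Y r s ∈ S)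
    (hC : ∀ r s, C r s ∈ Rp) (r s : n) : (A * Y * C.map φ) r s ∈ S := by
  simp only [mul_apply, map_apply]
  exact Submodule.sum_mem _ fun j _ => hS _
    (Submodule.sum_mem _ fun k _ => Submodule.smul_mem S ⟨A r k, hA r k⟩ (hY k j)) _ (hC j s)

theorem map_mul_mul_apply_mem (hS : ∀ z ∈ S, ∀ x ∈ Rp, z * φ x ∈ S)
    {A Y C : Matrix n n R} (hA : ∀ r s, A r s ∈ Rp) (hY : ∀ r s, Y r s ∈ S)
    (hC : ∀ r s, C r s ∈ Rp) (r s : n) : (C.map φ * Y * A) r s ∈ S := by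
  have htr : C.map φ * Y * A = (Aᵀ * Yᵀ * Cᵀ.map φ)ᵀ := by
    simp only [transpose_mul, transpose_transpose, transpose_map, Matrix.mul_assoc]
  rw [htr]
  exact mul_mul_map_apply_mem hS (fun r s => hA s r) (fun r s => hY s r) (fun r s => hC s r) s r

end Matrix

section BoundedElements

variable {B : Type*} [CommRing B] (Bp : Subring B)

theorem Subring.mem_span_singleton_iff {e x : B} :
    x ∈ Bp ∙ e ↔ ∃ v ∈ Bp, x = e * v := by
  rw [Submodule.mem_span_singleton]
  constructor
  · rintro ⟨v, rfl⟩
    exact ⟨v, v.2, mul_comm _ _⟩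
  · rintro ⟨v, hv, rfl⟩
    exact ⟨⟨v, hv⟩, mul_comm _ _⟩

theorem Subring.mul_mem_span_singleton_mul {e x : B} (d : B) (hx : x ∈ Bp ∙ e) :
    d * x ∈ Bp ∙ (d * e) := by
  obtain ⟨v, rfl⟩ := Submodule.mem_span_singleton.mp hx
  exact Submodule.mem_span_singleton.mpr ⟨v, (mul_smul_comm v d e).symm⟩

variable (tinv : B) (p a c m : ℕ)

def boundedElements : Submodule Bp B where
  carrier := {z | ∀ i ≤ a, (p : B) ^ (a - i) * z ∈ Bp ∙ tinv ^ (m + c * i)}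
  zero_mem' i _ := by simp
  add_mem' hx hy i hi := by
    rw [mul_add]
    exact add_mem (hx i hi) (hy i hi)
  smul_mem' v z hz i hi := by
    rw [mul_smul_comm]
    exact Submodule.smul_mem _ v (hz i hi)

variable {Bp tinv p a c m}

theorem mem_boundedElements_iff {z : B} : z ∈ boundedElements Bp tinv p a c m ↔
    ∀ i ≤ a, ∃ v ∈ Bp, (p : B) ^ (a - i) * z = tinv ^ (m + c * i) * v := by
  simp only [boundedElements, Submodule.mem_mk, AddSubmonoid.mem_mk,
    AddSubsemigroup.mem_mk, Set.mem_ofPred_eq, Subring.mem_span_singleton_iff]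

theorem mBounded_iff {n : ℕ} {X : Matrix (Fin n) (Fin n) B} :
    MBounded Bp tinv p a c m X ↔ IsUnit X ∧ (∀ r s, X r s ∈ boundedElements Bp tinv p a c m) ∧
      ∀ r s, X⁻¹ r s ∈ boundedElements Bp tinv p a c m := by
  simp only [MBounded, mem_boundedElements_iff]
  constructor
  · rintro ⟨hX, h⟩
    exact ⟨hX, fun r s i hi => (h i hi r s).1, fun r s i hi => (h i hi r s).2⟩
  · rintro ⟨hX, h, h'⟩
    exact ⟨hX, fun i hi r s => ⟨h r s i hi, h' r s i hi⟩⟩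

theorem natCast_mul_pow_mul_mem_boundedElements (hpa : (p : B) ^ a = 0) {z : B}
    (hz : z ∈ boundedElements Bp tinv p a c m) :
    (p : B) * tinv ^ c * z ∈ boundedElements Bp tinv p a c m := by
  rintro (_ | j) hj
  · simp [← mul_assoc, hpa]
  · have hp : (p : B) ^ (a - j) = (p : B) ^ (a - (j + 1)) * p := by
      rw [← pow_succ]
      congr 1
      omega
    convert Subring.mul_mem_span_singleton_mul Bp (tinv ^ c) (hz j (by omega)) using 1
    · rw [← pow_add]
      ring_nf
    · rw [hp]
      ring

theorem mul_map_mem_boundedElements (hpa : (p : B) ^ a = 0) (φ : B →+* B)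
    (hφ : ∀ x ∈ Bp, ∃ y ∈ Bp, ∃ z ∈ Bp, φ x = y + (p : B) * tinv ^ c * z) {z x : B}
    (hz : z ∈ boundedElements Bp tinv p a c m) (hx : x ∈ Bp) :
    z * φ x ∈ boundedElements Bp tinv p a c m := by
  obtain ⟨y, hy, w, hw, hφx⟩ := hφ x hx
  have hsplit : z * φ x = (⟨y, hy⟩ : Bp) • z + (⟨w, hw⟩ : Bp) • ((p : B) * tinv ^ c * z) := by
    rw [hφx, Subring.smul_def, Subring.smul_def]
    ring
  rw [hsplit]
  exact add_mem (Submodule.smul_mem _ _ hz)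
    (Submodule.smul_mem _ _ (natCast_mul_pow_mul_mem_boundedElements hpa hz))

end BoundedElements

theorem mBounded_twisted_conj_general
    {p a : ℕ}
    {B : Type*} [CommRing B] (hpa : (p : B) ^ a = 0)
    (Bp : Subring B) (tinv : B)
    (c : ℕ) (φ : B →+* B)
    (hφ : ∀ x ∈ Bp, ∃ y ∈ Bp, ∃ z ∈ Bp, φ x = y + (p : B) * tinv ^ c * z)
    {NN : ℕ} (m : ℕ)
    (g : Matrix (Fin NN) (Fin NN) B) (hg : IsUnit g)
    (hg_ent : ∀ r s, g r s ∈ Bp) (hginv_ent : ∀ r s, g⁻¹ r s ∈ Bp)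
    (X : Matrix (Fin NN) (Fin NN) B) (hX : MBounded Bp tinv p a c m X) :
    MBounded Bp tinv p a c m (g⁻¹ * X * g.map ⇑φ) := by
  obtain ⟨hXunit, hXent, hXinvent⟩ := mBounded_iff.mp hX
  have hS : ∀ z ∈ boundedElements Bp tinv p a c m, ∀ x ∈ Bp, z * φ x ∈ _ :=
    fun _ hz _ hx => mul_map_mem_boundedElements hpa φ hφ hz hx
  refine mBounded_iff.mpr ⟨Matrix.inv_mul_mul_map_isUnit φ hg hXunit,
    Matrix.mul_mul_map_apply_mem hS hginv_ent hXent hg_ent, ?_⟩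
  rw [Matrix.inv_inv_mul_mul_map φ hg]
  exact Matrix.map_mul_mul_apply_mem hS hg_ent hXinvent hginv_ent

/-- the ring-theoretic content of Lemma 3.2.3(4) of the paper.
Let `p^a·B = 0`, `B⁺ ⊆ B` a subring, `t ∈ B⁺` invertible in `B` with inverse `tinv`,
`c ≥ 0`, and `φ : B → B` a ring endomorphism with `φ(B⁺) ⊆ B⁺ + p·t^{-c}·B⁺`.  Then for
every invertible matrix `g` with all entries of `g` and `g⁻¹` in `B⁺` and every
`m`-bounded `X`, the matrix `g⁻¹·X·φ(g)` is again `m`-bounded. -/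
theorem mBounded_twisted_conj
    {p a : ℕ} (hp : p.Prime) (ha : 1 ≤ a)
    {B : Type*} [CommRing B] (hpa : (p : B) ^ a = 0)
    (Bp : Subring B) (t tinv : B) (ht : t ∈ Bp) (htinv : t * tinv = 1)
    (c : ℕ) (φ : B →+* B)
    (hφ : ∀ x ∈ Bp, ∃ y ∈ Bp, ∃ z ∈ Bp, φ x = y + (p : B) * tinv ^ c * z)
    {NN : ℕ} (m : ℕ)
    (g : Matrix (Fin NN) (Fin NN) B) (hg : IsUnit g)
    (hg_ent : ∀ r s, g r s ∈ Bp) (hginv_ent : ∀ r s, g⁻¹ r s ∈ Bp)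
    (X : Matrix (Fin NN) (Fin NN) B) (hX : MBounded Bp tinv p a c m X) :
    MBounded Bp tinv p a c m (g⁻¹ * X * g.map ⇑φ) :=
  mBounded_twisted_conj_general hpa Bp tinv c φ hφ m g hg hg_ent hginv_ent X hX

end
end

section
/- Let P be a group, U a normal subgroup of P, and Z the center of U. Let γ : P → P be a group homomorphism with γ(U) ⊆ U and γ(Z) ⊆ Z, and let φ : P → P be a group homomorphism with φ(U) ⊆ U and φ(Z) ⊆ Z. For α, β ∈ P set λ(α, β) := γ(α)^{-1}·β^{-1}·α·φ(β). Let a_l, b_l ∈ P and a_u, b_u ∈ U with λ(a_l, b_l) = 1, and set α = a_l·a_u, β = b_l·b_u. Then for all z, z' ∈ Z one has λ(α·z, β·z') = λ(α, β) · γ(z)^{-1} · (γ(a_l)^{-1}·z'·γ(a_l))^{-1} · (φ(b_l)^{-1}·z·φ(b_l)) · φ(z'); in particular λ(α·z, β·z')·λ(α, β)^{-1} lies in Z. -/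
/-- `z` lies in the center of the subgroup `U` of `P` (viewed inside `P`). -/
def MemCenterOf {P : Type*} [Group P] (U : Subgroup P) (z : P) : Prop :=
  z ∈ U ∧ ∀ w ∈ U, z * w = w * z

lemma MemCenterOf.conj {P : Type*} [Group P] {U : Subgroup P} (hU : U.Normal) {x : P}
    (hx : MemCenterOf U x) (p : P) : MemCenterOf U (p⁻¹ * x * p) := by
  obtain ⟨hxU, hxc⟩ := hx
  refine ⟨by simpa using hU.conj_mem x hxU p⁻¹, fun w hw => ?_⟩
  have hw' : p * w * p⁻¹ ∈ U := hU.conj_mem w hw p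
  have hc := hxc _ hw'
  calc (p⁻¹ * x * p) * w = p⁻¹ * (x * (p * w * p⁻¹)) * p := by group
    _ = p⁻¹ * ((p * w * p⁻¹) * x) * p := by rw [hc]
    _ = w * (p⁻¹ * x * p) := by group

lemma MemCenterOf.inv' {P : Type*} [Group P] {U : Subgroup P} {x : P}
    (hx : MemCenterOf U x) : MemCenterOf U x⁻¹ := by
  obtain ⟨hxU, hxc⟩ := hx
  refine ⟨inv_mem hxU, fun w hw => ?_⟩
  have hc : Commute x w := hxc w hw
  exact hc.inv_left.eq

lemma MemCenterOf.mul' {P : Type*} [Group P] {U : Subgroup P} {x y : P}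
    (hx : MemCenterOf U x) (hy : MemCenterOf U y) : MemCenterOf U (x * y) := by
  refine ⟨mul_mem hx.1 hy.1, fun w hw => ?_⟩
  calc x * y * w = x * (y * w) := by group
    _ = x * (w * y) := by rw [hy.2 w hw]
    _ = (x * w) * y := by group
    _ = (w * x) * y := by rw [hx.2 w hw]
    _ = w * (x * y) := by group

/-- part (2) of Lemma 7.4.1 of the paper.
Let `P` be a group, `U` a normal subgroup, `Z` the center of `U`, and `γ, φ : P →* P`
homomorphisms preserving `U` and `Z`.  With `λ(α, β) := γ(α)⁻¹·β⁻¹·α·φ(β)`, if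
`λ(a_l, b_l) = 1`, `a_u, b_u ∈ U`, `α = a_l·a_u`, `β = b_l·b_u`, then for `z, z' ∈ Z`:
`λ(α·z, β·z') = λ(α, β) · γ(z)⁻¹ · (γ(a_l)⁻¹·z'·γ(a_l))⁻¹ · (φ(b_l)⁻¹·z·φ(b_l)) · φ(z')`,
and in particular `λ(α·z, β·z')·λ(α, β)⁻¹` lies in `Z`. -/
theorem lambda_mul_central_shift {P : Type*} [Group P] (U : Subgroup P) (hU : U.Normal)
    (γ φ : P →* P)
    (hγU : ∀ x ∈ U, γ x ∈ U) (hφU : ∀ x ∈ U, φ x ∈ U)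
    (hγZ : ∀ x, MemCenterOf U x → MemCenterOf U (γ x))
    (hφZ : ∀ x, MemCenterOf U x → MemCenterOf U (φ x))
    (a_l b_l : P) (a_u b_u : P) (ha_u : a_u ∈ U) (hb_u : b_u ∈ U)
    (h : (γ a_l)⁻¹ * b_l⁻¹ * a_l * φ b_l = 1)
    (α β : P) (hα : α = a_l * a_u) (hβ : β = b_l * b_u)
    (z z' : P) (hz : MemCenterOf U z) (hz' : MemCenterOf U z') :
    (γ (α * z))⁻¹ * (β * z')⁻¹ * (α * z) * φ (β * z') =
      ((γ α)⁻¹ * β⁻¹ * α * φ β) * (γ z)⁻¹ * ((γ a_l)⁻¹ * z' * γ a_l)⁻¹ *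
        ((φ b_l)⁻¹ * z * φ b_l) * φ z' ∧
    MemCenterOf U
      (((γ (α * z))⁻¹ * (β * z')⁻¹ * (α * z) * φ (β * z')) *
        ((γ α)⁻¹ * β⁻¹ * α * φ β)⁻¹) := by
  set c2 := (γ a_l)⁻¹ * z' * γ a_l with hc2def
  set c3 := (φ b_l)⁻¹ * z * φ b_l with hc3def
  have hc2 : MemCenterOf U c2 := hz'.conj hU (γ a_l)
  have hc3 : MemCenterOf U c3 := hz.conj hU (φ b_l)
  have hγz : MemCenterOf U (γ z) := hγZ z hz
  have hφz' : MemCenterOf U (φ z') := hφZ z' hz'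
  -- A ∈ U
  have hAeq : (γ α)⁻¹ * β⁻¹ * α * φ β =
      (γ a_u)⁻¹ * ((γ a_l)⁻¹ * b_u⁻¹ * γ a_l) * ((γ a_l)⁻¹ * b_l⁻¹ * a_l * φ b_l) *
        ((φ b_l)⁻¹ * a_u * φ b_l) * φ b_u := by
    rw [hα, hβ, map_mul, map_mul]; group
  have hA : (γ α)⁻¹ * β⁻¹ * α * φ β ∈ U := by
    rw [hAeq, h]
    exact mul_mem (mul_mem (mul_mem (mul_mem (inv_mem (hγU _ ha_u))
      (by simpa using hU.conj_mem _ (inv_mem hb_u) (γ a_l)⁻¹)) (one_mem U))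
      (by simpa using hU.conj_mem _ ha_u (φ b_l)⁻¹)) (hφU _ hb_u)
  -- conjugation formulas
  have F1 : (γ α)⁻¹ * z' * γ α = c2 := by
    have hcc : c2 * γ a_u = γ a_u * c2 := hc2.2 _ (hγU _ ha_u)
    rw [hα, map_mul]
    calc (γ a_l * γ a_u)⁻¹ * z' * (γ a_l * γ a_u)
        = (γ a_u)⁻¹ * (c2 * γ a_u) := by rw [hc2def]; group
      _ = (γ a_u)⁻¹ * (γ a_u * c2) := by rw [hcc]
      _ = c2 := by group
  have F2 : (φ β)⁻¹ * z * φ β = c3 := by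
    have hcc : c3 * φ b_u = φ b_u * c3 := hc3.2 _ (hφU _ hb_u)
    rw [hβ, map_mul]
    calc (φ b_l * φ b_u)⁻¹ * z * (φ b_l * φ b_u)
        = (φ b_u)⁻¹ * (c3 * φ b_u) := by rw [hc3def]; group
      _ = (φ b_u)⁻¹ * (φ b_u * c3) := by rw [hcc]
      _ = c3 := by group
  have e1 : (γ α)⁻¹ * z'⁻¹ = c2⁻¹ * (γ α)⁻¹ := by rw [← F1]; group
  have e2 : z * φ β = φ β * c3 := by rw [← F2]; group
  have key : (γ (α * z))⁻¹ * (β * z')⁻¹ * (α * z) * φ (β * z')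
      = (γ z)⁻¹ * c2⁻¹ * ((γ α)⁻¹ * β⁻¹ * α * φ β) * c3 * φ z' := by
    calc (γ (α * z))⁻¹ * (β * z')⁻¹ * (α * z) * φ (β * z')
        = (γ z)⁻¹ * ((γ α)⁻¹ * z'⁻¹) * β⁻¹ * α * (z * φ β) * φ z' := by
          rw [map_mul γ α z, map_mul φ β z']; group
      _ = (γ z)⁻¹ * (c2⁻¹ * (γ α)⁻¹) * β⁻¹ * α * (φ β * c3) * φ z' := by rw [e1, e2]
      _ = (γ z)⁻¹ * c2⁻¹ * ((γ α)⁻¹ * β⁻¹ * α * φ β) * c3 * φ z' := by group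
  have hx : MemCenterOf U ((γ z)⁻¹ * c2⁻¹) := hγz.inv'.mul' hc2.inv'
  have hxc := hx.2 _ hA
  constructor
  · rw [key]
    calc (γ z)⁻¹ * c2⁻¹ * ((γ α)⁻¹ * β⁻¹ * α * φ β) * c3 * φ z'
        = ((γ z)⁻¹ * c2⁻¹) * ((γ α)⁻¹ * β⁻¹ * α * φ β) * c3 * φ z' := by group
      _ = (((γ α)⁻¹ * β⁻¹ * α * φ β) * ((γ z)⁻¹ * c2⁻¹)) * c3 * φ z' := by rw [hxc]
      _ = ((γ α)⁻¹ * β⁻¹ * α * φ β) * (γ z)⁻¹ * c2⁻¹ * c3 * φ z' := by group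
  · have hQ : MemCenterOf U ((γ z)⁻¹ * c2⁻¹ * c3 * φ z') :=
      (hγz.inv'.mul' hc2.inv').mul' hc3 |>.mul' hφz'
    have hy : MemCenterOf U (c3 * φ z') := hc3.mul' hφz'
    have hyc := hy.2 _ hA
    have : ((γ (α * z))⁻¹ * (β * z')⁻¹ * (α * z) * φ (β * z')) *
        ((γ α)⁻¹ * β⁻¹ * α * φ β)⁻¹ = (γ z)⁻¹ * c2⁻¹ * c3 * φ z' := by
      rw [key]
      calc (γ z)⁻¹ * c2⁻¹ * ((γ α)⁻¹ * β⁻¹ * α * φ β) * c3 * φ z' *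
            ((γ α)⁻¹ * β⁻¹ * α * φ β)⁻¹
          = (γ z)⁻¹ * c2⁻¹ * (((γ α)⁻¹ * β⁻¹ * α * φ β) * (c3 * φ z')) *
            ((γ α)⁻¹ * β⁻¹ * α * φ β)⁻¹ := by group
        _ = (γ z)⁻¹ * c2⁻¹ * ((c3 * φ z') * ((γ α)⁻¹ * β⁻¹ * α * φ β)) *
            ((γ α)⁻¹ * β⁻¹ * α * φ β)⁻¹ := by rw [← hyc]
        _ = (γ z)⁻¹ * c2⁻¹ * c3 * φ z' := by group
    rw [this]
    exact hQ
end

section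
/- Let B be a commutative ring and let φ, γ : B → B be ring homomorphisms with φ∘γ = γ∘φ. Let P, Q ∈ GL_n(B) satisfy P·φ(Q) = Q·γ(P), where φ and γ are applied to matrices and vectors entrywise. For column vectors x, y ∈ B^n, let X_x and Y_y be the (n+1)×(n+1) block upper-triangular matrices with blocks [[P, x],[0, 1]] and [[Q, y],[0, 1]] respectively. Let E be the set of pairs (x, y) ∈ B^n × B^n with X_x·φ(Y_y) = Y_y·γ(X_x), and say (x, y) ∼ (x + P·φ(v) − v, y + Q·γ(v) − v) for v ∈ B^n (this is an equivalence relation on B^n × B^n). Then: (i) (x, y) ∈ E if and only if (P^{-1}·x, Q^{-1}·y) ∈ ker(d¹); and (ii) the assignment (x, y) ↦ (P^{-1}·x, Q^{-1}·y) induces a bijection from E/∼ onto the first cohomology ker(d¹)/im(d⁰) of the framed Herr complex. -/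
/-!
The block matrices `[[P, x], [0, 1]]` multiply like affine maps, so given `P·φ(Q) = Q·γ(P)`,
`(x, y) ∈ E` says `x + P·φ(y) = y + Q·γ(x)`. Multiplying `d¹(a, b)` by the invertible matrix
`P·φ(Q) = Q·γ(P)` gives `(Q·b + Q·γ(P·a)) − (P·a + P·φ(Q·b))`, so `(a, b)` is a cocycle iff
`(P·a, Q·b) ∈ E`. Finally `P⁻¹` and `Q⁻¹` carry the shift `(P·φ(v) − v, Q·γ(v) − v)` defining `∼`
to the coboundary `d⁰(v)`.
-/

noncomputable section

/-- Apply a ring endomorphism coordinatewise to a vector. -/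
def mapVec {B : Type*} [CommRing B] {n : ℕ} (φ : B →+* B) (x : Fin n → B) : Fin n → B :=
  fun i => φ (x i)

/-- The degree-0 differential of the framed Herr complex:
`d⁰(z) = (φ(z) − P⁻¹·z, γ(z) − Q⁻¹·z)`. -/
def herrD0 {B : Type*} [CommRing B] {n : ℕ} (φ γ : B →+* B)
    (P Q : Matrix (Fin n) (Fin n) B) (z : Fin n → B) : (Fin n → B) × (Fin n → B) :=
  (mapVec φ z - P⁻¹.mulVec z, mapVec γ z - Q⁻¹.mulVec z)

/-- The degree-1 differential of the framed Herr complex: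
`d¹(x, y) = (γ(x) − φ(Q)⁻¹·x) + (γ(P)⁻¹·y − φ(y))`. -/
def herrD1 {B : Type*} [CommRing B] {n : ℕ} (φ γ : B →+* B)
    (P Q : Matrix (Fin n) (Fin n) B) (w : (Fin n → B) × (Fin n → B)) : Fin n → B :=
  (mapVec γ w.1 - (Q.map ⇑φ)⁻¹.mulVec w.1) + ((P.map ⇑γ)⁻¹.mulVec w.2 - mapVec φ w.2)

/-- The `(n+1)×(n+1)` block upper-triangular matrix `[[P, x], [0, 1]]`. -/
def blockExt {B : Type*} [CommRing B] {n : ℕ} (P : Matrix (Fin n) (Fin n) B)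
    (x : Fin n → B) : Matrix (Fin n ⊕ Fin 1) (Fin n ⊕ Fin 1) B :=
  Matrix.fromBlocks P (Matrix.of fun i (_ : Fin 1) => x i) 0 1

/-- The set `E` of pairs `(x, y)` such that `X_x·φ(Y_y) = Y_y·γ(X_x)`. -/
def herrExt {B : Type*} [CommRing B] {n : ℕ} (φ γ : B →+* B)
    (P Q : Matrix (Fin n) (Fin n) B) (w : (Fin n → B) × (Fin n → B)) : Prop :=
  blockExt P w.1 * (blockExt Q w.2).map ⇑φ = blockExt Q w.2 * (blockExt P w.1).map ⇑γ

/-- The equivalence relation `(x, y) ∼ (x + P·φ(v) − v, y + Q·γ(v) − v)`. -/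
def herrRel {B : Type*} [CommRing B] {n : ℕ} (φ γ : B →+* B)
    (P Q : Matrix (Fin n) (Fin n) B)
    (w w' : (Fin n → B) × (Fin n → B)) : Prop :=
  ∃ v : Fin n → B,
    w'.1 = w.1 + P.mulVec (mapVec φ v) - v ∧ w'.2 = w.2 + Q.mulVec (mapVec γ v) - v

open Matrix

section MatrixLemmas

variable {R : Type*} [CommRing R] {m : Type*} [Fintype m] [DecidableEq m]
  {M : Matrix m m R}

lemma Matrix.mulVec_nonsing_inv_mulVec (hM : IsUnit M) (v : m → R) : M *ᵥ (M⁻¹ *ᵥ v) = v := by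
  rw [mulVec_mulVec, mul_nonsing_inv _ (isUnit_iff_isUnit_det M |>.mp hM), one_mulVec]

lemma Matrix.nonsing_inv_mulVec_mulVec (hM : IsUnit M) (v : m → R) : M⁻¹ *ᵥ (M *ᵥ v) = v := by
  rw [mulVec_mulVec, nonsing_inv_mul _ (isUnit_iff_isUnit_det M |>.mp hM), one_mulVec]

lemma Matrix.eq_add_mulVec_sub_iff (hM : IsUnit M) (x x' u v : m → R) :
    x' = x + M *ᵥ u - v ↔ M⁻¹ *ᵥ x' - M⁻¹ *ᵥ x = u - M⁻¹ *ᵥ v := by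
  have hMinv : IsUnit M⁻¹ := isUnit_nonsing_inv_iff.mpr hM
  calc x' = x + M *ᵥ u - v
      ↔ M⁻¹ *ᵥ x' = M⁻¹ *ᵥ (x + M *ᵥ u - v) := (mulVec_injective_of_isUnit hMinv).eq_iff.symm
    _ ↔ M⁻¹ *ᵥ x' - M⁻¹ *ᵥ x = u - M⁻¹ *ᵥ v := by
      rw [mulVec_sub, mulVec_add, nonsing_inv_mulVec_mulVec hM]
      constructor <;> intro h <;> linear_combination h

end MatrixLemmas

section HerrComplex

variable {B : Type*} [CommRing B] {n : ℕ}

section MapVec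

variable (φ : B →+* B)

lemma mapVec_add (x y : Fin n → B) : mapVec φ (x + y) = mapVec φ x + mapVec φ y :=
  map_add (φ.compLeft (Fin n)) x y

lemma mapVec_neg (x : Fin n → B) : mapVec φ (-x) = -mapVec φ x :=
  map_neg (φ.compLeft (Fin n)) x

lemma mapVec_zero : mapVec φ (0 : Fin n → B) = 0 :=
  map_zero (φ.compLeft (Fin n))

lemma mapVec_mulVec (M : Matrix (Fin n) (Fin n) B) (v : Fin n → B) :
    mapVec φ (M *ᵥ v) = M.map φ *ᵥ mapVec φ v :=
  funext (RingHom.map_mulVec φ M v)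

end MapVec

lemma blockExt_mul (P Q : Matrix (Fin n) (Fin n) B) (x y : Fin n → B) :
    blockExt P x * blockExt Q y = blockExt (P * Q) (x + P *ᵥ y) := by
  ext (i | i) (j | j) <;>
    simp [blockExt, mulVec, dotProduct, Matrix.mul_apply, one_apply, Fin.eq_zero, add_comm]

lemma blockExt_map (φ : B →+* B) (P : Matrix (Fin n) (Fin n) B) (x : Fin n → B) :
    (blockExt P x).map φ = blockExt (P.map φ) (mapVec φ x) := by
  ext (i | i) (j | j) <;> simp [blockExt, mapVec, one_apply]

lemma blockExt_inj {P P' : Matrix (Fin n) (Fin n) B} {x x' : Fin n → B} :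
    blockExt P x = blockExt P' x' ↔ P = P' ∧ x = x' := by
  refine ⟨fun h => ?_, fun ⟨hP, hx⟩ => hP ▸ hx ▸ rfl⟩
  obtain ⟨hP, hx, -, -⟩ := fromBlocks_inj.mp h
  exact ⟨hP, funext fun i => congrFun (congrFun hx i) 0⟩

variable {φ γ : B →+* B} {P Q : Matrix (Fin n) (Fin n) B}

lemma herrExt_iff (hPQ : P * Q.map φ = Q * P.map γ) (x y : Fin n → B) :
    herrExt φ γ P Q (x, y) ↔ x + P *ᵥ mapVec φ y = y + Q *ᵥ mapVec γ x := by
  simp only [herrExt, blockExt_map, blockExt_mul, blockExt_inj, hPQ, true_and]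

lemma mulVec_herrD1 (hP : IsUnit P) (hQ : IsUnit Q) (hPQ : P * Q.map φ = Q * P.map γ)
    (a b : Fin n → B) :
    (P * Q.map φ) *ᵥ herrD1 φ γ P Q (a, b) =
      (Q *ᵥ b + Q *ᵥ mapVec γ (P *ᵥ a)) - (P *ᵥ a + P *ᵥ mapVec φ (Q *ᵥ b)) := by
  have hPγ : IsUnit (P.map γ) := hP.map γ.mapMatrix
  have hQφ : IsUnit (Q.map φ) := hQ.map φ.mapMatrix
  have e₁ : (P * Q.map φ) *ᵥ mapVec γ a = Q *ᵥ mapVec γ (P *ᵥ a) := by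
    rw [hPQ, ← mulVec_mulVec, mapVec_mulVec]
  have e₂ : (P * Q.map φ) *ᵥ ((Q.map φ)⁻¹ *ᵥ a) = P *ᵥ a := by
    rw [← mulVec_mulVec, mulVec_nonsing_inv_mulVec hQφ]
  have e₃ : (P * Q.map φ) *ᵥ ((P.map γ)⁻¹ *ᵥ b) = Q *ᵥ b := by
    rw [hPQ, ← mulVec_mulVec, mulVec_nonsing_inv_mulVec hPγ]
  have e₄ : (P * Q.map φ) *ᵥ mapVec φ b = P *ᵥ mapVec φ (Q *ᵥ b) := by
    rw [← mulVec_mulVec, mapVec_mulVec]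
  rw [herrD1, mulVec_add, mulVec_sub, mulVec_sub, e₁, e₂, e₃, e₄]
  abel

lemma herrD1_eq_zero_iff (hP : IsUnit P) (hQ : IsUnit Q) (hPQ : P * Q.map φ = Q * P.map γ)
    (a b : Fin n → B) :
    herrD1 φ γ P Q (a, b) = 0 ↔
      P *ᵥ a + P *ᵥ mapVec φ (Q *ᵥ b) = Q *ᵥ b + Q *ᵥ mapVec γ (P *ᵥ a) := by
  have hR : IsUnit (P * Q.map φ) := hP.mul (hQ.map φ.mapMatrix)
  rw [← (mulVec_injective_of_isUnit hR).eq_iff, mulVec_zero, mulVec_herrD1 hP hQ hPQ,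
    sub_eq_zero, eq_comm]

lemma herrExt_iff_herrD1_eq_zero (hP : IsUnit P) (hQ : IsUnit Q)
    (hPQ : P * Q.map φ = Q * P.map γ) (x y : Fin n → B) :
    herrExt φ γ P Q (x, y) ↔ herrD1 φ γ P Q (P⁻¹ *ᵥ x, Q⁻¹ *ᵥ y) = 0 := by
  rw [herrExt_iff hPQ, herrD1_eq_zero_iff hP hQ hPQ, mulVec_nonsing_inv_mulVec hP,
    mulVec_nonsing_inv_mulVec hQ]

lemma herrRel_equivalence : Equivalence (herrRel φ γ P Q) where
  refl _ := ⟨0, by simp [mapVec_zero], by simp [mapVec_zero]⟩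
  symm := by
    rintro w w' ⟨v, h₁, h₂⟩
    refine ⟨-v, ?_, ?_⟩
    · rw [h₁, mapVec_neg, mulVec_neg]; abel
    · rw [h₂, mapVec_neg, mulVec_neg]; abel
  trans := by
    rintro w w' w'' ⟨v, h₁, h₂⟩ ⟨u, h₃, h₄⟩
    refine ⟨v + u, ?_, ?_⟩
    · rw [h₃, h₁, mapVec_add, mulVec_add]; abel
    · rw [h₄, h₂, mapVec_add, mulVec_add]; abel

lemma herrRel_iff_exists_herrD0 (hP : IsUnit P) (hQ : IsUnit Q) (x y x' y' : Fin n → B) :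
    herrRel φ γ P Q (x, y) (x', y') ↔
      ∃ v, (P⁻¹ *ᵥ x', Q⁻¹ *ᵥ y') - (P⁻¹ *ᵥ x, Q⁻¹ *ᵥ y) = herrD0 φ γ P Q v := by
  simp only [herrRel, herrD0, Prod.mk_sub_mk, Prod.mk.injEq,
    eq_add_mulVec_sub_iff hP, eq_add_mulVec_sub_iff hQ]

end HerrComplex

theorem herr_first_cohomology_classifies_extensions_general
    {B : Type*} [CommRing B] {n : ℕ} (φ γ : B →+* B)
    (P Q : Matrix (Fin n) (Fin n) B) (hP : IsUnit P) (hQ : IsUnit Q)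
    (hPQ : P * Q.map ⇑φ = Q * P.map ⇑γ) :
    -- `∼` is an equivalence relation
    Equivalence (herrRel φ γ P Q) ∧
    -- (i) membership in `E` is equivalent to being a cocycle
    (∀ x y : Fin n → B,
      herrExt φ γ P Q (x, y) ↔ herrD1 φ γ P Q (P⁻¹.mulVec x, Q⁻¹.mulVec y) = 0) ∧
    -- (ii) well-definedness and injectivity on equivalence classes
    (∀ x y x' y' : Fin n → B, herrExt φ γ P Q (x, y) → herrExt φ γ P Q (x', y') →
      (herrRel φ γ P Q (x, y) (x', y') ↔
        ∃ v : Fin n → B,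
          (P⁻¹.mulVec x', Q⁻¹.mulVec y') - (P⁻¹.mulVec x, Q⁻¹.mulVec y) =
            herrD0 φ γ P Q v)) ∧
    -- (ii) surjectivity onto the first cohomology
    (∀ w : (Fin n → B) × (Fin n → B), herrD1 φ γ P Q w = 0 →
      ∃ x y : Fin n → B, herrExt φ γ P Q (x, y) ∧
        ∃ v : Fin n → B,
          (P⁻¹.mulVec x, Q⁻¹.mulVec y) - w = herrD0 φ γ P Q v) := by
  refine ⟨herrRel_equivalence, herrExt_iff_herrD1_eq_zero hP hQ hPQ,
    fun x y x' y' _ _ => herrRel_iff_exists_herrD0 hP hQ x y x' y', fun w hw => ?_⟩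
  refine ⟨P *ᵥ w.1, Q *ᵥ w.2, ?_, 0, ?_⟩
  · rwa [herrExt_iff_herrD1_eq_zero hP hQ hPQ, nonsing_inv_mulVec_mulVec hP,
      nonsing_inv_mulVec_mulVec hQ]
  · simp [nonsing_inv_mulVec_mulVec hP, nonsing_inv_mulVec_mulVec hQ, herrD0, mapVec_zero,
    Prod.mk_zero_zero]

/-- the Proposition of Section 7.3 of the paper, in matrix form.
With `φ∘γ = γ∘φ` and `P·φ(Q) = Q·γ(P)` for `P, Q ∈ GL_n(B)`: the relation `∼` is an
equivalence relation; a pair `(x, y)` lies in `E` iff `(P⁻¹x, Q⁻¹y) ∈ ker d¹`; and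
`(x, y) ↦ (P⁻¹x, Q⁻¹y)` induces a bijection from `E/∼` onto the first cohomology
`ker d¹ / im d⁰` of the framed Herr complex. -/
theorem herr_first_cohomology_classifies_extensions
    {B : Type*} [CommRing B] {n : ℕ} (φ γ : B →+* B)
    (hcomm : φ.comp γ = γ.comp φ)
    (P Q : Matrix (Fin n) (Fin n) B) (hP : IsUnit P) (hQ : IsUnit Q)
    (hPQ : P * Q.map ⇑φ = Q * P.map ⇑γ) :
    -- `∼` is an equivalence relation
    Equivalence (herrRel φ γ P Q) ∧
    -- (i) membership in `E` is equivalent to being a cocycle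
    (∀ x y : Fin n → B,
      herrExt φ γ P Q (x, y) ↔ herrD1 φ γ P Q (P⁻¹.mulVec x, Q⁻¹.mulVec y) = 0) ∧
    -- (ii) well-definedness and injectivity on equivalence classes
    (∀ x y x' y' : Fin n → B, herrExt φ γ P Q (x, y) → herrExt φ γ P Q (x', y') →
      (herrRel φ γ P Q (x, y) (x', y') ↔
        ∃ v : Fin n → B,
          (P⁻¹.mulVec x', Q⁻¹.mulVec y') - (P⁻¹.mulVec x, Q⁻¹.mulVec y) =
            herrD0 φ γ P Q v)) ∧
    -- (ii) surjectivity onto the first cohomology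
    (∀ w : (Fin n → B) × (Fin n → B), herrD1 φ γ P Q w = 0 →
      ∃ x y : Fin n → B, herrExt φ γ P Q (x, y) ∧
        ∃ v : Fin n → B,
          (P⁻¹.mulVec x, Q⁻¹.mulVec y) - w = herrD0 φ γ P Q v) :=
  herr_first_cohomology_classifies_extensions_general φ γ P Q hP hQ hPQ

end
end

section
/- Let A be a reduced Noetherian commutative ring and let C• be a bounded cochain complex of finite free A-modules. Let (h^i)_{i ∈ ℤ} be natural numbers. Suppose that for every prime ideal 𝔭 of A and every i, the κ(𝔭)-vector space H^i(C• ⊗_A κ(𝔭)) has dimension h^i, where κ(𝔭) is the residue field of A at 𝔭. Then for every i the cohomology module H^i(C•) is a finitely generated projective A-module, and for every prime ideal 𝔭 the localization H^i(C•)_𝔭 is a free A_𝔭-module of rank h^i. -/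
/-!
Write `q_j(𝔭)` for the `κ(𝔭)`-dimension of the fiber of `coker d^j`. Over the field `κ(𝔭)`,
`h^{j+1} + rk C^{j+2} = q_j(𝔭) + q_{j+1}(𝔭)`, and `q_j = 0` for `j` large, so descending
induction shows that every `q_j` is constant on `Spec A`.

Over a reduced ring a finitely presented module with constant fiber dimension is projective:
at a maximal ideal, lift a basis of the closed fiber to a surjection from a free module of the
same rank; it becomes an isomorphism on every fiber, so the coordinates of a kernel element lie in
every prime, hence are nilpotent, hence zero.

So all cokernels are projective, and the sequences `0 → im d^{i+1} → C^{i+2} → coker d^{i+1} → 0`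
and `0 → H^{i+1} → coker d^i → im d^{i+1} → 0` split. Hence `H^{i+1}` is projective, and its
rank at `𝔭` satisfies the same additive relation as the fiber dimensions, so it equals `h^{i+1}`.
-/

/-- The cohomology `ker g / im f` of a pair of composable linear maps. -/
abbrev cohQuot {S : Type*} [CommRing S]
    {M₀ M₁ M₂ : Type*} [AddCommGroup M₀] [AddCommGroup M₁] [AddCommGroup M₂]
    [Module S M₀] [Module S M₁] [Module S M₂]
    (f : M₀ →ₗ[S] M₁) (g : M₁ →ₗ[S] M₂) : Type _ :=
  ↥(LinearMap.ker g) ⧸ Submodule.comap (LinearMap.ker g).subtype (LinearMap.range f)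

/-- The residue field `κ(𝔭)` of a commutative ring at a prime ideal `𝔭`. -/
abbrev residueFieldAt {A : Type*} [CommRing A] (𝔭 : Ideal A) [𝔭.IsPrime] : Type _ :=
  IsLocalRing.ResidueField (Localization.AtPrime 𝔭)

open TensorProduct Module

namespace LinearMap

variable {R N P : Type*} [CommRing R] [AddCommGroup N] [AddCommGroup P] [Module R N] [Module R P]

theorem nonempty_equiv_ker_prod_of_surjective [Module.Projective R P] (φ : N →ₗ[R] P)
    (hφ : Function.Surjective φ) : Nonempty (N ≃ₗ[R] ker φ × P) :=
  let s := φ.exists_rightInverse_of_surjective (range_eq_top.2 hφ)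
  ⟨((exact_subtype_ker_map φ).splitSurjectiveEquiv (ker φ).injective_subtype
    ⟨s.choose, s.choose_spec⟩).1⟩

theorem projective_ker_of_surjective [Module.Projective R N] [Module.Projective R P]
    (φ : N →ₗ[R] P) (hφ : Function.Surjective φ) : Module.Projective R (ker φ) :=
  let ⟨e⟩ := φ.nonempty_equiv_ker_prod_of_surjective hφ
  .of_split (e.symm.toLinearMap ∘ₗ inl R _ _) (fst R _ _ ∘ₗ e.toLinearMap) (by ext; simp)

theorem rankAtStalk_eq_rankAtStalk_ker_add [Module.Projective R P] [Module.Finite R P]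
    (φ : N →ₗ[R] P) (hφ : Function.Surjective φ) [Module.Finite R (ker φ)]
    [Module.Flat R (ker φ)] :
    rankAtStalk (R := R) N = rankAtStalk (ker φ) + rankAtStalk P :=
  let ⟨e⟩ := φ.nonempty_equiv_ker_prod_of_surjective hφ
  (rankAtStalk_eq_of_equiv e).trans (rankAtStalk_prod _ _)

theorem injective_of_surjective_of_finrank_fiber_eq [IsReduced R] {ι : Type*} [Fintype ι]
    (φ : (ι → R) →ₗ[R] N) (hφ : Function.Surjective φ)
    (h : ∀ (P : Ideal R) [P.IsPrime], finrank P.ResidueField (P.Fiber N) = Fintype.card ι) :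
    Function.Injective φ := by
  classical
  refine (injective_iff_map_eq_zero φ).mpr fun x hx => funext fun i => ?_
  suffices x i ∈ nilradical R by simpa [nilradical_eq_zero] using this
  refine (nilradical_eq_sInf R).symm ▸ Ideal.mem_sInf.mpr fun {P} (hP : P.IsPrime) => ?_
  let κ := P.ResidueField
  have : Module.Finite κ (κ ⊗[R] N) := .of_surjective _ (φ.baseChange_surjective κ hφ)
  have hφκ : Function.Injective (φ.baseChange κ) := by
    refine (injective_iff_surjective_of_finrank_eq_finrank ?_).mpr (φ.baseChange_surjective κ hφ)
    rw [h, (Algebra.TensorProduct.piScalarRight R κ κ ι).toLinearEquiv.finrank_eq,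
      finrank_fintype_fun_eq_card]
  have hx1 : (1 : κ) ⊗ₜ[R] x = 0 := hφκ (by simp [hx])
  have := congr_fun (congrArg (Algebra.TensorProduct.piScalarRight R κ κ ι) hx1) i
  rwa [Algebra.TensorProduct.piScalarRight_tmul_apply, map_zero, Pi.zero_apply,
    Algebra.smul_def, mul_one, Ideal.algebraMap_residueField_eq_zero] at this

variable {U V W : Type*} [AddCommGroup U] [AddCommGroup V] [AddCommGroup W]
  [Module R U] [Module R V] [Module R W]

noncomputable def cohQuotEquivKerLiftQ (f : U →ₗ[R] V) (g : V →ₗ[R] W) (hfg : range f ≤ ker g) :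
    cohQuot f g ≃ₗ[R] ker ((range f).liftQ g.rangeRestrict (ker_rangeRestrict g ▸ hfg)) :=
  Submodule.quotEquivOfEq _ _ (by rw [ker_comp, Submodule.ker_mkQ]) ≪≫ₗ
    ((range f).mkQ ∘ₗ (ker g).subtype).quotKerEquivRange ≪≫ₗ
    LinearEquiv.ofEq _ _ (by rw [Submodule.ker_liftQ, ker_rangeRestrict, range_comp,
      Submodule.range_subtype])

noncomputable def baseChangeQuotRangeEquiv (S : Type*) [CommRing S] [Algebra R S]
    (f : V →ₗ[R] W) : S ⊗[R] (W ⧸ range f) ≃ₗ[S] (S ⊗[R] W) ⧸ range (f.baseChange S) :=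
  (Function.Exact.linearEquivOfSurjective
    (by rw [baseChange_eq_ltensor, baseChange_eq_ltensor]
        exact lTensor_exact S (exact_iff.mpr (Submodule.ker_mkQ _)) (Submodule.mkQ_surjective _))
    (baseChange_surjective S (Submodule.mkQ_surjective _))).symm

theorem finrank_cohQuot_add_finrank {K : Type*} [Field K] [Module K U] [Module K V] [Module K W]
    [FiniteDimensional K V] [FiniteDimensional K W] (f : U →ₗ[K] V) (g : V →ₗ[K] W)
    (hgf : g ∘ₗ f = 0) :
    finrank K (cohQuot f g) + finrank K W = finrank K (V ⧸ range f) + finrank K (W ⧸ range g) := by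
  have hH := Submodule.finrank_quotient_add_finrank (Submodule.comap (ker g).subtype (range f))
  rw [(Submodule.comapSubtypeEquivOfLe (range_le_ker_iff.mpr hgf)).finrank_eq] at hH
  have hV := Submodule.finrank_quotient_add_finrank (range f)
  have hW := Submodule.finrank_quotient_add_finrank (range g)
  have hg := finrank_range_add_finrank_ker g
  dsimp only [cohQuot]
  omega

theorem finrank_cohQuot_baseChange_add [Module.Finite R V] [Module.Finite R W] [Module.Free R W]
    (K : Type*) [Field K] [Algebra R K] (f : U →ₗ[R] V) (g : V →ₗ[R] W) (hgf : g ∘ₗ f = 0) :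
    finrank K (cohQuot (f.baseChange K) (g.baseChange K)) + finrank R W =
      finrank K (K ⊗[R] (V ⧸ range f)) + finrank K (K ⊗[R] (W ⧸ range g)) := by
  have : Nontrivial R := (algebraMap R K).domain_nontrivial
  rw [(baseChangeQuotRangeEquiv K f).finrank_eq, (baseChangeQuotRangeEquiv K g).finrank_eq,
    ← finrank_baseChange (R := K) (M' := W)]
  refine finrank_cohQuot_add_finrank (f.baseChange K) (g.baseChange K) ?_
  rw [← baseChange_comp, hgf, baseChange_zero]

theorem projective_cohQuot_and_rankAtStalk_add [IsNoetherianRing R] [Module.Finite R V]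
    [Module.Finite R W] [Module.Projective R W] (f : U →ₗ[R] V) (g : V →ₗ[R] W)
    (hgf : g ∘ₗ f = 0) [Module.Projective R (V ⧸ range f)] [Module.Projective R (W ⧸ range g)] :
    Module.Projective R (cohQuot f g) ∧
      rankAtStalk (R := R) (cohQuot f g) + rankAtStalk W =
        rankAtStalk (V ⧸ range f) + rankAtStalk (W ⧸ range g) := by
  have hfg : range f ≤ ker g := range_le_ker_iff.mpr hgf
  have eB : ker (range g).mkQ ≃ₗ[R] range g := LinearEquiv.ofEq _ _ (Submodule.ker_mkQ _)
  have : Module.Projective R (ker (range g).mkQ) :=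
    projective_ker_of_surjective _ (Submodule.mkQ_surjective _)
  have : Module.Projective R (range g) := .of_equiv eB
  let dbar := (range f).liftQ g.rangeRestrict (ker_rangeRestrict g ▸ hfg)
  have hdbar : Function.Surjective dbar := surjective_range_liftQ _ g.surjective_rangeRestrict
  let eH := cohQuotEquivKerLiftQ f g hfg
  have : Module.Projective R (ker dbar) := projective_ker_of_surjective _ hdbar
  refine ⟨.of_equiv eH.symm, ?_⟩
  rw [rankAtStalk_eq_rankAtStalk_ker_add _ hdbar,
    rankAtStalk_eq_rankAtStalk_ker_add _ (Submodule.mkQ_surjective (range g)),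
    rankAtStalk_eq_of_equiv eH, rankAtStalk_eq_of_equiv eB]
  ring

end LinearMap

theorem Ideal.finrank_fiber_baseChange {R S : Type*} [CommRing R] [CommRing S] [Algebra R S]
    (N : Type*) [AddCommGroup N] [Module R N] (P : Ideal S) [P.IsPrime] :
    finrank P.ResidueField (P.Fiber (S ⊗[R] N)) =
      finrank (P.under R).ResidueField ((P.under R).Fiber N) := by
  let _ : Algebra (P.under R).ResidueField P.ResidueField :=
    (Ideal.ResidueField.map _ P (algebraMap R S) rfl).toAlgebra
  have : IsScalarTower R (P.under R).ResidueField P.ResidueField :=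
    .of_algebraMap_eq fun r => by
      simp [RingHom.algebraMap_toAlgebra, ← IsScalarTower.algebraMap_apply]
  rw [(AlgebraTensorModule.cancelBaseChange R S P.ResidueField P.ResidueField N).finrank_eq,
    ← (AlgebraTensorModule.cancelBaseChange R (P.under R).ResidueField P.ResidueField
      P.ResidueField N).finrank_eq, finrank_baseChange]

theorem Module.free_of_finrank_fiber_eq {R : Type*} [CommRing R] [IsLocalRing R] [IsReduced R]
    {N : Type*} [AddCommGroup N] [Module R N] [Module.Finite R N]
    (h : ∀ (P : Ideal R) [P.IsPrime], finrank P.ResidueField (P.Fiber N) =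
      finrank (IsLocalRing.ResidueField R) (IsLocalRing.ResidueField R ⊗[R] N)) :
    Module.Free R N := by
  let b := Free.chooseBasis (IsLocalRing.ResidueField R) (IsLocalRing.ResidueField R ⊗[R] N)
  obtain ⟨v, hv⟩ := (TensorProduct.mk_surjective R N _ Ideal.Quotient.mk_surjective).comp_left b
  have hspan := IsLocalRing.span_eq_top_of_tmul_eq_basis v b (congrFun hv)
  have hsurj : Function.Surjective (Fintype.linearCombination R v) := by
    rwa [← LinearMap.range_eq_top, Fintype.range_linearCombination]
  refine .of_equiv (LinearEquiv.ofBijective _ ⟨?_, hsurj⟩)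
  refine LinearMap.injective_of_surjective_of_finrank_fiber_eq _ hsurj fun P _ => ?_
  rw [h, finrank_eq_card_chooseBasisIndex]

theorem Module.projective_of_finrank_fiber_eq {A : Type*} [CommRing A] [IsReduced A]
    {N : Type*} [AddCommGroup N] [Module A N] [Module.FinitePresentation A N]
    (h : ∀ (p q : Ideal A) [p.IsPrime] [q.IsPrime],
      finrank p.ResidueField (p.Fiber N) = finrank q.ResidueField (q.Fiber N)) :
    Module.Projective A N := by
  refine projective_of_localization_maximal fun m _ => ?_
  let Aₘ := Localization.AtPrime m
  have : Module.Free Aₘ (Aₘ ⊗[A] N) := free_of_finrank_fiber_eq fun P _ => by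
    rw [Ideal.finrank_fiber_baseChange N P,
      (AlgebraTensorModule.cancelBaseChange A Aₘ _ _ N).finrank_eq]
    exact h _ m
  exact .of_equiv (LocalizedModule.equivTensorProduct m.primeCompl N).symm

theorem eq_of_add_succ_eq_of_eq_zero {ι : Type*} (q : ℤ → ι → ℕ) (b : ℤ)
    (hq : ∀ j x y, q j x + q (j + 1) x = q j y + q (j + 1) y)
    (hb : ∀ j, b ≤ j → ∀ x, q j x = 0) (j : ℤ) (x y : ι) : q j x = q j y := by
  obtain hj | hj := le_or_gt b j
  · rw [hb j hj, hb j hj]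
  replace hj := hj.le
  induction j, hj using Int.leInductionDown generalizing x y with
  | base => rw [hb b le_rfl, hb b le_rfl]
  | pred n _ ih =>
    have := hq (n - 1) x y
    rw [sub_add_cancel, ih x y] at this
    omega

/-- the second assertion of Lemma 8.2.1 of the paper.
Let `A` be a reduced Noetherian commutative ring and `C•` a bounded cochain complex of
finite free `A`-modules.  If for every prime `𝔭` of `A` the `κ(𝔭)`-dimension of
`H^i(C• ⊗_A κ(𝔭))` is `h^i` for all `i`, then each `H^i(C•)` is a finitely generated
projective `A`-module whose localization at every prime `𝔭` is free of rank `h^i` over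
`A_𝔭`. -/
theorem cohomology_projective_of_constant_fiber_rank
    {A : Type*} [CommRing A] [IsNoetherianRing A] [IsReduced A]
    (M : ℤ → Type) [∀ i, AddCommGroup (M i)] [∀ i, Module A (M i)]
    [∀ i, Module.Free A (M i)] [∀ i, Module.Finite A (M i)]
    (d : ∀ i : ℤ, M i →ₗ[A] M (i + 1))
    (hdd : ∀ i : ℤ, (d (i + 1)).comp (d i) = 0)
    (hbdd : ∃ a b : ℤ, ∀ i : ℤ, (i < a ∨ b < i) → ∀ x : M i, x = 0)
    (h : ℤ → ℕ)
    (hfib : ∀ (𝔭 : Ideal A) [𝔭.IsPrime], ∀ i : ℤ,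
      Module.rank (residueFieldAt 𝔭)
        (cohQuot ((d i).baseChange (residueFieldAt 𝔭))
          ((d (i + 1)).baseChange (residueFieldAt 𝔭))) = h (i + 1)) :
    ∀ i : ℤ,
      Module.Finite A (cohQuot (d i) (d (i + 1))) ∧
      Module.Projective A (cohQuot (d i) (d (i + 1))) ∧
      ∀ (𝔭 : Ideal A) [𝔭.IsPrime],
        Module.Free (Localization.AtPrime 𝔭)
          (LocalizedModule 𝔭.primeCompl (cohQuot (d i) (d (i + 1)))) ∧
        Module.rank (Localization.AtPrime 𝔭)
          (LocalizedModule 𝔭.primeCompl (cohQuot (d i) (d (i + 1)))) = h (i + 1) := by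
  obtain ⟨_, b, hb⟩ := hbdd
  let q (j : ℤ) (p : PrimeSpectrum A) : ℕ :=
    finrank p.asIdeal.ResidueField (p.asIdeal.Fiber (M (j + 1) ⧸ LinearMap.range (d j)))
  have hfiber (j : ℤ) (p : PrimeSpectrum A) :
      h (j + 1) + finrank A (M (j + 1 + 1)) = q j p + q (j + 1) p := by
    rw [← finrank_eq_of_rank_eq (hfib p.asIdeal j)]
    exact LinearMap.finrank_cohQuot_baseChange_add _ (d j) (d (j + 1)) (hdd j)
  have hvanish (j : ℤ) (hj : b ≤ j) (p : PrimeSpectrum A) : q j p = 0 := by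
    have : Subsingleton (M (j + 1)) :=
      ⟨fun x y => (hb _ (.inr (by omega)) x).trans (hb _ (.inr (by omega)) y).symm⟩
    exact finrank_zero_of_subsingleton
  have hconst := eq_of_add_succ_eq_of_eq_zero q b (fun j x y => by rw [← hfiber, ← hfiber]) hvanish
  have (j : ℤ) : Module.Projective A (M (j + 1) ⧸ LinearMap.range (d j)) :=
    have := finitePresentation_of_finite A (M (j + 1) ⧸ LinearMap.range (d j))
    projective_of_finrank_fiber_eq fun p p' _ _ => hconst j ⟨p, ‹_›⟩ ⟨p', ‹_›⟩
  intro i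
  obtain ⟨hH, hrank⟩ := (d i).projective_cohQuot_and_rankAtStalk_add (d (i + 1)) (hdd i)
  refine ⟨inferInstance, hH, fun 𝔭 _ => ⟨free_of_flat_of_isLocalRing, ?_⟩⟩
  let p : PrimeSpectrum A := ⟨𝔭, ‹_›⟩
  have hQ (j : ℤ) : rankAtStalk (M (j + 1) ⧸ LinearMap.range (d j)) p = q j p := rankAtStalk_eq p
  have hW : rankAtStalk (M (i + 1 + 1)) p = finrank A (M (i + 1 + 1)) := by simp
  have hHp := congrFun hrank p
  rw [Pi.add_apply, Pi.add_apply, hQ, hQ, hW] at hHp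
  rw [← finrank_eq_rank, Nat.cast_inj]
  change rankAtStalk _ p = _
  linarith [hfiber i p]
end
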